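/- arXiv:2203.16511 — 2 statements merged into one kernel-verified Lean document; each statement's English description precedes it below -/
import Mathlib

section
/- Let $\hat a : [0,2\pi) \to [0,\infty)$ be a bounded measurable function with $A = \mathcal{F}^{-1} M_{\hat a} \mathcal{F}$ on $\ell^2(\mathbb{Z})$. The following are equivalent: (1) $0$ is an eigenvalue of $V_n^* A V_n$ for some $n$; (2) $0$ is an eigenvalue of $V_n^* A V_n$ for every $n \ge 1$; (3) $A = 0$; (4) $\hat a = 0$ almost everywhere. -/
open MeasureTheory Finset

/-- Lebesgue measure restricted to `[0, 2π)`. -/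
noncomputable def μ2π : Measure ℝ := volume.restrict (Set.Ico 0 (2 * Real.pi))

/-- The `n×n` compression matrix `(V_n^* A V_n)_{j,l} = ⟨1_{j}, A 1_{l}⟩`. -/
noncomputable def compressMat (A : lp (fun _ : ℤ => ℂ) 2 →L[ℂ] lp (fun _ : ℤ => ℂ) 2)
    (n : ℕ) : Matrix (Fin n) (Fin n) ℂ :=
  fun j l => inner ℂ (lp.single 2 (j : ℤ) (1 : ℂ)) (A (lp.single 2 (l : ℤ) (1 : ℂ)))

open scoped InnerProductSpace Matrix

/-!
If `ψ ≠ 0` lies in the kernel of the compression, then `φ = V_n ψ` satisfies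
`0 = ⟪φ, A φ⟫ = ∫ â |𝓕 φ|²`, so the nonnegative symbol `â` vanishes a.e. off the zero set of
`𝓕 φ`. But `𝓕 φ = q(e^{ix}) / √(2π)` for the nonzero polynomial `q` with coefficient vector `ψ`,
and it vanishes only on the countable set where `e^{ix}` hits a root of `q`. Hence `â = 0` a.e.,
which forces `A = 0`; the remaining implications are immediate.
-/

theorem ae_eq_zero_or_eq_zero_of_inner_eq_zero {α : Type*} [MeasurableSpace α] {μ : Measure α}
    {a : α → ℝ} (ha : ∀ᵐ x ∂μ, 0 ≤ a x) {f g : Lp ℂ 2 μ}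
    (hg : g =ᵐ[μ] fun x => (a x : ℂ) * f x) (h : ⟪f, g⟫_ℂ = 0) :
    ∀ᵐ x ∂μ, a x = 0 ∨ f x = 0 := by
  have hpoint : (fun x => ⟪f x, g x⟫_ℂ) =ᵐ[μ] fun x => ((a x * ‖f x‖ ^ 2 : ℝ) : ℂ) := by
    filter_upwards [hg] with x hx
    rw [hx, RCLike.inner_apply, mul_assoc, Complex.mul_conj']
    push_cast
    rfl
  have hint : Integrable (fun x => a x * ‖f x‖ ^ 2) μ := by
    simpa only [RCLike.re_to_complex, Complex.ofReal_re] using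
      ((L2.integrable_inner f g).congr hpoint).re
  have hzero : ∫ x, a x * ‖f x‖ ^ 2 ∂μ = 0 := by
    rw [L2.inner_def, integral_congr_ae hpoint, integral_complex_ofReal] at h
    exact_mod_cast h
  have hnonneg : 0 ≤ᵐ[μ] fun x => a x * ‖f x‖ ^ 2 := by
    filter_upwards [ha] with x hx using mul_nonneg hx (sq_nonneg _)
  filter_upwards [(integral_eq_zero_iff_of_nonneg_ae hnonneg hint).mp hzero] with x hx
  simpa using hx

theorem Complex.countable_setOf_exp_I_mul_eq (r : ℂ) :
    {x : ℝ | Complex.exp (Complex.I * x) = r}.Countable := by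
  rcases Set.eq_empty_or_nonempty {x : ℝ | Complex.exp (Complex.I * x) = r} with h | ⟨x₀, hx₀⟩
  · simp [h]
  refine (Set.countable_range fun n : ℤ => x₀ + n * (2 * Real.pi)).mono fun x hx => ?_
  obtain ⟨n, hn⟩ := Complex.exp_eq_exp_iff_exists_int.mp (hx.trans hx₀.symm)
  have him : x = x₀ + n * (2 * Real.pi) := by simpa using congrArg Complex.im hn
  exact ⟨n, him.symm⟩

theorem Polynomial.countable_setOf_eval_exp_I_mul_eq_zero {q : Polynomial ℂ} (hq : q ≠ 0) :
    {x : ℝ | q.eval (Complex.exp (Complex.I * x)) = 0}.Countable := by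
  refine ((q.roots.toFinset.countable_toSet).biUnion
    fun r _ => Complex.countable_setOf_exp_I_mul_eq r).mono fun x hx => ?_
  exact Set.mem_biUnion (by simpa [hq] using hx) rfl

/-- The isometry `V_n : ℂⁿ → ℓ²(ℤ)` onto the coordinates `0, …, n - 1`. -/
noncomputable def embedFin (n : ℕ) (ψ : Fin n → ℂ) : lp (fun _ : ℤ => ℂ) 2 :=
  ∑ j, ψ j • lp.single 2 (j : ℤ) 1

theorem inner_embedFin_apply_embedFin (A : lp (fun _ : ℤ => ℂ) 2 →L[ℂ] lp (fun _ : ℤ => ℂ) 2)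
    (n : ℕ) (ψ : Fin n → ℂ) :
    ⟪embedFin n ψ, A (embedFin n ψ)⟫_ℂ = star ψ ⬝ᵥ compressMat A n *ᵥ ψ := by
  simp only [embedFin, map_sum, map_smul, sum_inner, inner_sum, inner_smul_left, inner_smul_right,
    dotProduct, Matrix.mulVec, compressMat, Finset.mul_sum, Pi.star_apply, RCLike.star_def]
  rw [Finset.sum_comm]
  exact Finset.sum_congr rfl fun j _ => Finset.sum_congr rfl fun l _ => by ring

theorem coeFn_embedFin {μ : Measure ℝ} {𝓕 : Type*} [FunLike 𝓕 (lp (fun _ : ℤ => ℂ) 2) (Lp ℂ 2 μ)]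
    [LinearMapClass 𝓕 ℂ (lp (fun _ : ℤ => ℂ) 2) (Lp ℂ 2 μ)] (F : 𝓕) (c : ℂ)
    (hF : ∀ k : ℤ, (F (lp.single 2 k (1 : ℂ)) : ℝ → ℂ)
      =ᵐ[μ] fun x => Complex.exp (Complex.I * k * x) / c)
    {n : ℕ} (ψ : Fin n → ℂ) :
    F (embedFin n ψ) =ᵐ[μ]
      fun x => (Polynomial.ofFn n ψ).eval (Complex.exp (Complex.I * x)) / c := by
  have hterm : ∀ j : Fin n, ⇑(ψ j • F (lp.single 2 (j : ℤ) 1)) =ᵐ[μ]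
      fun x => ψ j * Complex.exp (Complex.I * x) ^ (j : ℕ) / c := by
    intro j
    filter_upwards [Lp.coeFn_smul (ψ j) (F _), hF j] with x hsmul hx
    rw [hsmul, Pi.smul_apply, hx, smul_eq_mul, ← Complex.exp_nat_mul]
    push_cast
    ring_nf
  filter_upwards [Lp.coeFn_fun_finsetSum univ fun j => ψ j • F (lp.single 2 (j : ℤ) 1),
    ae_all_iff.mpr hterm] with x hsum hj
  simp only [embedFin, map_sum, map_smul, hsum, hj, Polynomial.ofFn_eq_sum_monomial,
    Polynomial.eval_finsetSum, Polynomial.eval_monomial, Finset.sum_div]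

theorem compression_zero_eigenvalue_TFAE_general
    (a : ℝ → ℝ) (ha_nonneg : ∀ x, 0 ≤ a x)
    (F : lp (fun _ : ℤ => ℂ) 2 ≃ₗᵢ[ℂ] Lp ℂ 2 μ2π)
    (hF : ∀ k : ℤ, (F (lp.single 2 k (1 : ℂ)) : ℝ → ℂ)
      =ᵐ[μ2π] fun x => Complex.exp (Complex.I * k * x) / Real.sqrt (2 * Real.pi))
    (A : lp (fun _ : ℤ => ℂ) 2 →L[ℂ] lp (fun _ : ℤ => ℂ) 2)
    (hA : ∀ ψ, (F (A ψ) : ℝ → ℂ) =ᵐ[μ2π] fun x => (a x : ℂ) * (F ψ : ℝ → ℂ) x) :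
    [ (∃ n : ℕ, 1 ≤ n ∧ ∃ ψ : Fin n → ℂ, ψ ≠ 0 ∧ (compressMat A n).mulVec ψ = 0),
      (∀ n : ℕ, 1 ≤ n → ∃ ψ : Fin n → ℂ, ψ ≠ 0 ∧ (compressMat A n).mulVec ψ = 0),
      A = 0,
      a =ᵐ[μ2π] 0 ].TFAE := by
  tfae_have 1 → 4 := by
    rintro ⟨n, -, ψ, hψ, hker⟩
    have hq : Polynomial.ofFn n ψ ≠ 0 := by
      simpa using (Polynomial.injective_ofFn n).ne hψ
    have hquad : ⟪F (embedFin n ψ), F (A (embedFin n ψ))⟫_ℂ = 0 := by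
      rw [LinearIsometryEquiv.inner_map_map, inner_embedFin_apply_embedFin, hker, dotProduct_zero]
    have hroots : ∀ᵐ x ∂μ2π,
        x ∉ {x : ℝ | (Polynomial.ofFn n ψ).eval (Complex.exp (Complex.I * x)) = 0} :=
      ae_restrict_of_ae ((Polynomial.countable_setOf_eval_exp_I_mul_eq_zero hq).ae_notMem volume)
    filter_upwards [ae_eq_zero_or_eq_zero_of_inner_eq_zero (.of_forall ha_nonneg) (hA _) hquad,
      coeFn_embedFin F _ hF ψ, hroots] with x hax hFx hx
    refine hax.resolve_right ?_
    rw [hFx]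
    exact div_ne_zero hx (Complex.ofReal_ne_zero.mpr (by positivity))
  tfae_have 4 → 3 := by
    intro h4
    ext1 ψ
    apply F.injective
    rw [zero_apply, map_zero, Lp.eq_zero_iff_ae_eq_zero]
    filter_upwards [hA ψ, h4] with x hx hax
    simp [hx, hax]
  tfae_have 3 → 2 := by
    rintro rfl n hn
    have : NeZero n := ⟨by omega⟩
    exact ⟨1, one_ne_zero, by ext; simp [compressMat, Matrix.mulVec, dotProduct]⟩
  tfae_have 2 → 1 := fun h => ⟨1, le_rfl, h 1 le_rfl⟩
  tfae_finish

theorem compression_zero_eigenvalue_TFAE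
    (a : ℝ → ℝ) (ha_meas : Measurable a) (ha_nonneg : ∀ x, 0 ≤ a x)
    (ha_bdd : ∃ C, ∀ x, a x ≤ C)
    (F : lp (fun _ : ℤ => ℂ) 2 ≃ₗᵢ[ℂ] Lp ℂ 2 μ2π)
    (hF : ∀ k : ℤ, (F (lp.single 2 k (1 : ℂ)) : ℝ → ℂ)
      =ᵐ[μ2π] fun x => Complex.exp (Complex.I * k * x) / Real.sqrt (2 * Real.pi))
    (A : lp (fun _ : ℤ => ℂ) 2 →L[ℂ] lp (fun _ : ℤ => ℂ) 2)
    (hA : ∀ ψ, (F (A ψ) : ℝ → ℂ) =ᵐ[μ2π] fun x => (a x : ℂ) * (F ψ : ℝ → ℂ) x) :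
    [ (∃ n : ℕ, 1 ≤ n ∧ ∃ ψ : Fin n → ℂ, ψ ≠ 0 ∧ (compressMat A n).mulVec ψ = 0),
      (∀ n : ℕ, 1 ≤ n → ∃ ψ : Fin n → ℂ, ψ ≠ 0 ∧ (compressMat A n).mulVec ψ = 0),
      A = 0,
      a =ᵐ[μ2π] 0 ].TFAE :=
  compression_zero_eigenvalue_TFAE_general a ha_nonneg F hF A hA
end

section
/- Let $\hat a : [0,2\pi) \to [0,1]$ be measurable and identically $0$ on an interval $[\alpha,\omega]$, let $0 < \delta < (\omega-\alpha)/2$, and set $A = \mathcal{F}^{-1}M_{\hat a}\mathcal{F}$, $A_n = V_n^* A V_n$, and $E_{n,\delta} = \sum_{k : 2\pi k/n \in [\alpha+\delta,\omega-\delta]} |\mathcal{F}_n^* \mathbf{1}_{\{k\}}\rangle\langle \mathcal{F}_n^* \mathbf{1}_{\{k\}}|$. Then $E_{n,\delta}$ is an orthogonal projection on $\mathbb{C}^n$ and $\mathrm{Tr}(E_{n,\delta} A_n) \le \mathrm{Tr}(E_{n,\delta}) \cdot \frac{1}{n\sin^2(\delta/2)}$. -/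
open MeasureTheory Finset Matrix

/-- The `n`-dimensional discrete Fourier transform matrix. -/
noncomputable def dftMat (n : ℕ) : Matrix (Fin n) (Fin n) ℂ :=
  fun j k => Complex.exp (2 * Real.pi * Complex.I * j * k / n) / Real.sqrt n

/-- The spectral projection `E_{n,δ} = ∑_{k : 2πk/n ∈ [α+δ,ω-δ]} |F_n^* 1_k⟩⟨F_n^* 1_k|`. -/
noncomputable def Eproj (n : ℕ) (α ω δ : ℝ) : Matrix (Fin n) (Fin n) ℂ :=
  ∑ k ∈ Finset.univ.filter
      (fun k : Fin n => 2 * Real.pi * (k : ℝ) / n ∈ Set.Icc (α + δ) (ω - δ)),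
    Matrix.vecMulVec (fun j => (dftMat n)ᴴ j k) (fun j => star ((dftMat n)ᴴ j k))

/-!
`Eproj n α ω δ = F_nᴴ D F_n` with `F_n` unitary and `D` the diagonal indicator of the window
`S = {k | 2πk/n ∈ [α+δ, ω-δ]}`, so it is an orthogonal projection of trace `#S`, and
`Tr(E A_n) = ∑_{k ∈ S} ⟨v_k, A_n v_k⟩` with `v_k` the `k`-th Fourier vector. The Fourier transform
of `V_n v_k` is the Dirichlet kernel `D_n(x - 2πk/n) / √(2πn)`, so `⟨v_k, A_n v_k⟩` is the integral
of `a |D_n|² / (2πn)` over `[0, 2π)`. Since `a` vanishes on `[α, ω]`, only points with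
`δ ≤ |x - 2πk/n| ≤ 2π - δ` contribute, and there `|D_n| ≤ 1 / sin(δ/2)`.
-/

namespace Matrix

variable {m ι R : Type*} [Fintype ι] [DecidableEq ι] [CommRing R] [StarRing R]

lemma sum_vecMulVec_col_eq_mul_diagonal_mul (B : Matrix m ι R) (S : Finset ι) :
    ∑ k ∈ S, vecMulVec (fun i => B i k) (fun j => star (B j k)) =
      B * diagonal (fun k => if k ∈ S then (1 : R) else 0) * Bᴴ := by
  ext i j
  rw [mul_apply]
  simp [mul_diagonal, Matrix.sum_apply, vecMulVec_apply, Finset.sum_ite_mem]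

variable {U : Matrix ι m R} (S : Finset ι)

lemma isHermitian_conjTranspose_mul_diagonal_indicator_mul :
    (Uᴴ * diagonal (fun k => if k ∈ S then (1 : R) else 0) * U).IsHermitian :=
  isHermitian_conjTranspose_mul_mul U <| isHermitian_diagonal_of_self_adjoint _ <| by
    ext k; simp [apply_ite star]

variable [Fintype m]

lemma trace_conjTranspose_mul_diagonal_indicator_mul_mul (M : Matrix m m R) :
    (Uᴴ * diagonal (fun k => if k ∈ S then (1 : R) else 0) * U * M).trace =
      ∑ k ∈ S, (U * M * Uᴴ) k k := by
  rw [Matrix.mul_assoc, trace_mul_comm, ← Matrix.mul_assoc, trace_mul_comm]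
  simp [trace, Matrix.mul_assoc, Finset.sum_ite_mem]

variable (hU : U * Uᴴ = 1)
include hU

lemma isIdempotentElem_conjTranspose_mul_diagonal_indicator_mul :
    IsIdempotentElem (Uᴴ * diagonal (fun k => if k ∈ S then (1 : R) else 0) * U) := by
  simp only [IsIdempotentElem, Matrix.mul_assoc]
  rw [← Matrix.mul_assoc U, hU, Matrix.one_mul, ← Matrix.mul_assoc (diagonal _),
    diagonal_mul_diagonal]
  congr 3
  ext k
  split_ifs <;> simp

lemma trace_conjTranspose_mul_diagonal_indicator_mul [DecidableEq m] :
    (Uᴴ * diagonal (fun k => if k ∈ S then (1 : R) else 0) * U).trace = S.card := by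
  simpa [hU] using trace_conjTranspose_mul_diagonal_indicator_mul_mul (U := U) S 1

end Matrix

open Complex

lemma IsPrimitiveRoot.geom_sum_zpow {K : Type*} [Field K] {ζ : K} {n : ℕ}
    (hζ : IsPrimitiveRoot ζ n) (d : ℤ) :
    ∑ j ∈ range n, (ζ ^ d) ^ j = if (n : ℤ) ∣ d then (n : K) else 0 := by
  split_ifs with h
  · simp [(hζ.zpow_eq_one_iff_dvd d).mpr h]
  · have hne : ζ ^ d ≠ 1 := mt (hζ.zpow_eq_one_iff_dvd d).mp h
    rw [geom_sum_eq hne, ← zpow_natCast, ← _root_.zpow_mul, mul_comm, _root_.zpow_mul,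
      zpow_natCast, hζ.pow_eq_one, _root_.one_zpow, sub_self, zero_div]

lemma star_dftMat_apply (n : ℕ) (k l : Fin n) :
    star (dftMat n k l) = exp (-(2 * Real.pi * I * k * l / n)) / Real.sqrt n := by
  simp only [dftMat, RCLike.star_def, map_div₀, conj_ofReal, ← exp_conj]
  congr 2
  simp [map_ofNat]
  ring

lemma dftMat_mul_star_dftMat_apply (n : ℕ) (k k' l : Fin n) :
    dftMat n k l * star (dftMat n k' l) =
      (exp (2 * Real.pi * I / n) ^ ((k : ℤ) - k')) ^ (l : ℕ) / n := by
  rw [star_dftMat_apply, dftMat, div_mul_div_comm, ← exp_add, ← exp_int_mul, ← exp_nat_mul,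
    ← ofReal_mul, Real.mul_self_sqrt n.cast_nonneg]
  congr 2
  push_cast
  ring

lemma dftMat_mul_conjTranspose (n : ℕ) : dftMat n * (dftMat n)ᴴ = 1 := by
  ext k k'
  have hn : n ≠ 0 := k.pos.ne'
  simp only [mul_apply, conjTranspose_apply, dftMat_mul_star_dftMat_apply, ← Finset.sum_div,
    Fin.sum_univ_eq_sum_range (fun l => (exp (2 * Real.pi * I / n) ^ ((k : ℤ) - k')) ^ l),
    (isPrimitiveRoot_exp n hn).geom_sum_zpow, one_apply]
  have hdvd : (n : ℤ) ∣ (k : ℤ) - k' ↔ k = k' := by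
    refine ⟨fun h => Fin.ext ?_, fun h => by simp [h]⟩
    have := Int.eq_zero_of_abs_lt_dvd h (abs_sub_lt_iff.mpr ⟨by omega, by omega⟩)
    omega
  simp only [hdvd]
  split_ifs <;> simp [hn]

-- Multiplied out, so that it also holds where `sin (t / 2) = 0`.
lemma norm_geom_sum_exp_mul_abs_sin_le (n : ℕ) (t : ℝ) :
    ‖∑ l ∈ range n, exp (I * t) ^ l‖ * |Real.sin (t / 2)| ≤ 1 := by
  have hsub : ‖exp (I * t) - 1‖ = 2 * |Real.sin (t / 2)| := by
    rw [norm_exp_I_mul_ofReal_sub_one, Real.norm_eq_abs, abs_mul, abs_two]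
  have hpow : ‖exp (I * t) ^ n - 1‖ ≤ 2 := by
    calc ‖exp (I * t) ^ n - 1‖ ≤ ‖exp (I * t) ^ n‖ + ‖(1 : ℂ)‖ := norm_sub_le _ _
      _ = 2 := by rw [norm_pow, mul_comm, norm_exp_ofReal_mul_I]; norm_num
  have hmul := congrArg norm (geom_sum_mul (exp (I * t)) n)
  rw [norm_mul, hsub] at hmul
  linarith

lemma sin_half_le_abs_sin_half {δ t : ℝ} (hδ : 0 ≤ δ) (h₁ : δ ≤ |t|)
    (h₂ : |t| ≤ 2 * Real.pi - δ) : Real.sin (δ / 2) ≤ |Real.sin (t / 2)| := by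
  rw [Real.abs_sin_eq_sin_abs_of_abs_le_pi (by rw [abs_div, abs_two]; linarith), abs_div, abs_two]
  rcases le_total (|t| / 2) (Real.pi / 2) with h | h
  · exact Real.sin_le_sin_of_le_of_le_pi_div_two (by linarith [Real.pi_pos]) h (by linarith)
  · rw [← Real.sin_pi_sub (|t| / 2)]
    exact Real.sin_le_sin_of_le_of_le_pi_div_two (by linarith [Real.pi_pos]) (by linarith)
      (by linarith)

/-- The canonical embedding `V_n : ℂⁿ → ℓ²(ℤ)`. -/
noncomputable def finEmbed (n : ℕ) (u : Fin n → ℂ) : lp (fun _ : ℤ => ℂ) 2 :=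
  ∑ l, u l • lp.single 2 (l : ℤ) (1 : ℂ)

lemma star_dotProduct_compressMat_mulVec
    (A : lp (fun _ : ℤ => ℂ) 2 →L[ℂ] lp (fun _ : ℤ => ℂ) 2) {n : ℕ} (u : Fin n → ℂ) :
    star u ⬝ᵥ (compressMat A n *ᵥ u) = inner ℂ (finEmbed n u) (A (finEmbed n u)) := by
  simp only [finEmbed, map_sum, map_smul, sum_inner, inner_sum, inner_smul_left,
    inner_smul_right, dotProduct, mulVec, compressMat, Finset.mul_sum, Pi.star_apply,
    RCLike.star_def]
  rw [Finset.sum_comm]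
  exact Finset.sum_congr rfl fun l _ => Finset.sum_congr rfl fun j _ => by ring

lemma coeFn_finEmbed {X : Type*} [MeasurableSpace X] {μ : Measure X}
    (F : lp (fun _ : ℤ => ℂ) 2 →ₗᵢ[ℂ] Lp ℂ 2 μ) (e : ℤ → X → ℂ)
    (hF : ∀ k, (F (lp.single 2 k (1 : ℂ)) : X → ℂ) =ᵐ[μ] e k) {n : ℕ} (u : Fin n → ℂ) :
    (F (finEmbed n u) : X → ℂ) =ᵐ[μ] fun x => ∑ l, u l * e l x := by
  simp only [finEmbed, map_sum, map_smul]
  filter_upwards [Lp.coeFn_fun_finsetSum univ fun l : Fin n => u l • F (lp.single 2 (l : ℤ) 1),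
    ae_all_iff.mpr fun l : Fin n => (Lp.coeFn_smul (u l) (F (lp.single 2 (l : ℤ) 1))).and
      (hF l)] with x hsum hl
  rw [hsum]
  refine Finset.sum_congr rfl fun l _ => ?_
  rw [(hl l).1, Pi.smul_apply, (hl l).2, smul_eq_mul]

lemma inner_eq_integral_mul_norm_sq {X E : Type*} [MeasurableSpace X] {μ : Measure X}
    [NormedAddCommGroup E] [InnerProductSpace ℂ E] (F : E →ₗᵢ[ℂ] Lp ℂ 2 μ) (a : X → ℝ)
    {ψ φ : E} (h : (F φ : X → ℂ) =ᵐ[μ] fun x => (a x : ℂ) * F ψ x) :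
    inner ℂ ψ φ = ((∫ x, a x * ‖(F ψ : X → ℂ) x‖ ^ 2 ∂μ : ℝ) : ℂ) := by
  rw [← F.inner_map_map, L2.inner_def, ← integral_complex_ofReal]
  refine integral_congr_ae ?_
  filter_upwards [h] with x hx
  rw [hx, RCLike.inner_apply, mul_assoc, mul_conj', ofReal_mul, ofReal_pow]

lemma sum_star_dftMat_mul_exp (n : ℕ) (k : Fin n) (x : ℝ) :
    ∑ l : Fin n, star (dftMat n k l) * (exp (I * ((l : ℤ) : ℂ) * x) / Real.sqrt (2 * Real.pi)) =
      (∑ l ∈ range n, exp (I * ((x - 2 * Real.pi * k / n : ℝ) : ℂ)) ^ l) /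
        (Real.sqrt n * Real.sqrt (2 * Real.pi)) := by
  have hn : (n : ℂ) ≠ 0 := Nat.cast_ne_zero.mpr k.pos.ne'
  rw [← Fin.sum_univ_eq_sum_range (fun l => exp (I * ((x - 2 * Real.pi * k / n : ℝ) : ℂ)) ^ l),
    Finset.sum_div]
  refine Finset.sum_congr rfl fun l _ => ?_
  rw [star_dftMat_apply, div_mul_div_comm, ← exp_add, ← exp_nat_mul]
  congr 2
  push_cast
  field_simp
  ring

lemma abs_sub_mem_Icc_of_notMem_Icc {α ω δ θ x : ℝ} (hα : 0 ≤ α) (hω : ω < 2 * Real.pi)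
    (hδ : 0 ≤ δ) (hθ : θ ∈ Set.Icc (α + δ) (ω - δ)) (hx : x ∈ Set.Ico 0 (2 * Real.pi))
    (hxα : x ∉ Set.Icc α ω) : |x - θ| ∈ Set.Icc δ (2 * Real.pi - δ) := by
  obtain ⟨hθ₁, hθ₂⟩ := hθ
  obtain ⟨hx₁, hx₂⟩ := hx
  rcases lt_or_ge x α with h | h
  · rw [abs_of_neg (by linarith)]
    constructor <;> linarith
  · have : ω < x := lt_of_not_ge fun h' => hxα ⟨h, h'⟩
    rw [abs_of_pos (by linarith)]
    constructor <;> linarith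

lemma norm_sq_sum_star_dftMat_mul_exp_le {n : ℕ} (k : Fin n) {δ x : ℝ}
    (hδ : 0 < Real.sin (δ / 2))
    (hx : Real.sin (δ / 2) ≤ |Real.sin ((x - 2 * Real.pi * k / n) / 2)|) :
    ‖∑ l : Fin n, star (dftMat n k l) *
        (exp (I * ((l : ℤ) : ℂ) * x) / Real.sqrt (2 * Real.pi))‖ ^ 2 ≤
      1 / (n * Real.sin (δ / 2) ^ 2) / (2 * Real.pi) := by
  have hD := norm_geom_sum_exp_mul_abs_sin_le n (x - 2 * Real.pi * k / n)
  have hn : (0 : ℝ) < n := Nat.cast_pos.mpr k.pos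
  rw [sum_star_dftMat_mul_exp, norm_div, div_pow, norm_mul, norm_real, norm_real,
    Real.norm_of_nonneg (Real.sqrt_nonneg _), Real.norm_of_nonneg (Real.sqrt_nonneg _), mul_pow,
    Real.sq_sqrt hn.le, Real.sq_sqrt (by positivity)]
  have hDs : ‖∑ l ∈ range n, exp (I * ((x - 2 * Real.pi * k / n : ℝ) : ℂ)) ^ l‖ *
      Real.sin (δ / 2) ≤ 1 :=
    le_trans (mul_le_mul_of_nonneg_left hx (norm_nonneg _)) hD
  have hD2 : ‖∑ l ∈ range n, exp (I * ((x - 2 * Real.pi * k / n : ℝ) : ℂ)) ^ l‖ ^ 2 ≤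
      1 / Real.sin (δ / 2) ^ 2 := by
    rw [le_div_iff₀ (by positivity), ← mul_pow]
    exact pow_le_one₀ (by positivity) hDs
  calc _ ≤ 1 / Real.sin (δ / 2) ^ 2 / (n * (2 * Real.pi)) := by gcongr
    _ = _ := by field_simp

lemma integral_mul_norm_sq_finEmbed_star_dftMat_le {a : ℝ → ℝ}
    (ha01 : ∀ x, a x ∈ Set.Icc (0 : ℝ) 1) {α ω δ : ℝ} (hα : 0 ≤ α) (hω : ω < 2 * Real.pi)
    (hzero : ∀ x ∈ Set.Icc α ω, a x = 0) (hδ : 0 < δ)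
    (F : lp (fun _ : ℤ => ℂ) 2 →ₗᵢ[ℂ] Lp ℂ 2 μ2π)
    (hF : ∀ k : ℤ, (F (lp.single 2 k (1 : ℂ)) : ℝ → ℂ)
      =ᵐ[μ2π] fun x => exp (I * k * x) / Real.sqrt (2 * Real.pi))
    {n : ℕ} (k : Fin n) (hk : 2 * Real.pi * (k : ℝ) / n ∈ Set.Icc (α + δ) (ω - δ)) :
    ∫ x, a x * ‖(F (finEmbed n (star (dftMat n k))) : ℝ → ℂ) x‖ ^ 2 ∂μ2π ≤
      1 / (n * Real.sin (δ / 2) ^ 2) := by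
  have hδπ : δ < Real.pi := by linarith [hk.1.trans hk.2]
  have hsin : 0 < Real.sin (δ / 2) := Real.sin_pos_of_pos_of_lt_pi (by linarith) (by linarith)
  have hbound : ∀ᵐ x ∂μ2π, a x * ‖(F (finEmbed n (star (dftMat n k))) : ℝ → ℂ) x‖ ^ 2 ≤
      1 / (n * Real.sin (δ / 2) ^ 2) / (2 * Real.pi) := by
    filter_upwards [coeFn_finEmbed F _ hF (star (dftMat n k)),
      ae_restrict_mem measurableSet_Ico] with x hx hx_mem
    rw [hx]
    simp only [Pi.star_apply]
    by_cases hxα : x ∈ Set.Icc α ω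
    · rw [hzero x hxα, zero_mul]
      positivity
    · obtain ⟨h₁, h₂⟩ := abs_sub_mem_Icc_of_notMem_Icc hα hω hδ.le hk hx_mem hxα
      calc _ ≤ 1 * ‖∑ l : Fin n, star (dftMat n k l) *
            (exp (I * ((l : ℤ) : ℂ) * x) / Real.sqrt (2 * Real.pi))‖ ^ 2 := by
            gcongr
            exact (ha01 x).2
        _ ≤ _ := by
            rw [one_mul]
            exact norm_sq_sum_star_dftMat_mul_exp_le k hsin
              (sin_half_le_abs_sin_half hδ.le h₁ h₂)
  calc _ ≤ ∫ _ in Set.Ico 0 (2 * Real.pi), 1 / (n * Real.sin (δ / 2) ^ 2) / (2 * Real.pi) :=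
        integral_mono_of_nonneg (ae_of_all _ fun x => mul_nonneg (ha01 x).1 (by positivity))
          (integrableOn_const measure_Ico_lt_top.ne) hbound
    _ = _ := by
        rw [setIntegral_const, Real.volume_real_Ico_of_le (by positivity), sub_zero, smul_eq_mul]
        field_simp

lemma Eproj_eq_conjTranspose_mul_diagonal_mul (n : ℕ) (α ω δ : ℝ) :
    Eproj n α ω δ = (dftMat n)ᴴ * diagonal (fun k => if k ∈ univ.filter (fun k : Fin n =>
      2 * Real.pi * (k : ℝ) / n ∈ Set.Icc (α + δ) (ω - δ)) then (1 : ℂ) else 0) * dftMat n := by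
  have h := sum_vecMulVec_col_eq_mul_diagonal_mul (dftMat n)ᴴ
    (univ.filter fun k : Fin n => 2 * Real.pi * (k : ℝ) / n ∈ Set.Icc (α + δ) (ω - δ))
  rwa [conjTranspose_conjTranspose] at h

lemma dftMat_mul_compressMat_mul_conjTranspose_apply_self {X : Type*} [MeasurableSpace X]
    {μ : Measure X} (F : lp (fun _ : ℤ => ℂ) 2 →ₗᵢ[ℂ] Lp ℂ 2 μ) (a : X → ℝ)
    (A : lp (fun _ : ℤ => ℂ) 2 →L[ℂ] lp (fun _ : ℤ => ℂ) 2)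
    (hA : ∀ ψ, (F (A ψ) : X → ℂ) =ᵐ[μ] fun x => (a x : ℂ) * (F ψ : X → ℂ) x)
    {n : ℕ} (k : Fin n) :
    (dftMat n * compressMat A n * (dftMat n)ᴴ) k k =
      ((∫ x, a x * ‖(F (finEmbed n (star (dftMat n k))) : X → ℂ) x‖ ^ 2 ∂μ : ℝ) : ℂ) := by
  have hquad := star_dotProduct_compressMat_mulVec A (star (dftMat n k))
  rw [star_star] at hquad
  rw [mul_mul_apply, show (dftMat n)ᴴᵀ k = star (dftMat n k) from rfl, hquad]
  exact inner_eq_integral_mul_norm_sq F a (hA _)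

theorem projection_trace_bound_general
    (a : ℝ → ℝ) (ha01 : ∀ x, a x ∈ Set.Icc (0:ℝ) 1)
    (α ω : ℝ) (hα : 0 ≤ α) (hω : ω < 2 * Real.pi)
    (hzero : ∀ x ∈ Set.Icc α ω, a x = 0)
    (δ : ℝ) (hδ0 : 0 < δ)
    (F : lp (fun _ : ℤ => ℂ) 2 ≃ₗᵢ[ℂ] Lp ℂ 2 μ2π)
    (hF : ∀ k : ℤ, (F (lp.single 2 k (1 : ℂ)) : ℝ → ℂ)
      =ᵐ[μ2π] fun x => Complex.exp (Complex.I * k * x) / Real.sqrt (2 * Real.pi))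
    (A : lp (fun _ : ℤ => ℂ) 2 →L[ℂ] lp (fun _ : ℤ => ℂ) 2)
    (hA : ∀ ψ, (F (A ψ) : ℝ → ℂ) =ᵐ[μ2π] fun x => (a x : ℂ) * (F ψ : ℝ → ℂ) x)
    (n : ℕ) :
    (Eproj n α ω δ).IsHermitian ∧
    Eproj n α ω δ * Eproj n α ω δ = Eproj n α ω δ ∧
    ((Eproj n α ω δ * compressMat A n).trace).im = 0 ∧
    ((Eproj n α ω δ * compressMat A n).trace).re
      ≤ ((Eproj n α ω δ).trace).re * (1 / (n * Real.sin (δ / 2) ^ 2)) := by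
  set S := univ.filter fun k : Fin n => 2 * Real.pi * (k : ℝ) / n ∈ Set.Icc (α + δ) (ω - δ)
  set I : Fin n → ℝ := fun k =>
    ∫ x, a x * ‖(F (finEmbed n (star (dftMat n k))) : ℝ → ℂ) x‖ ^ 2 ∂μ2π
  have hE := Eproj_eq_conjTranspose_mul_diagonal_mul n α ω δ
  have htrace : (Eproj n α ω δ * compressMat A n).trace = ((∑ k ∈ S, I k : ℝ) : ℂ) := by
    rw [hE, trace_conjTranspose_mul_diagonal_indicator_mul_mul]
    push_cast
    exact Finset.sum_congr rfl fun k _ =>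
      dftMat_mul_compressMat_mul_conjTranspose_apply_self F.toLinearIsometry a A hA k
  have hI : ∑ k ∈ S, I k ≤ S.card * (1 / (n * Real.sin (δ / 2) ^ 2)) := by
    rw [← nsmul_eq_mul]
    refine Finset.sum_le_card_nsmul _ _ _ fun k hk => ?_
    exact integral_mul_norm_sq_finEmbed_star_dftMat_le ha01 hα hω hzero hδ0 F.toLinearIsometry hF
      k (Finset.mem_filter.mp hk).2
  have hU := dftMat_mul_conjTranspose n
  refine ⟨hE ▸ isHermitian_conjTranspose_mul_diagonal_indicator_mul S,
    hE ▸ (isIdempotentElem_conjTranspose_mul_diagonal_indicator_mul S hU).eq,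
    by rw [htrace, ofReal_im], ?_⟩
  rwa [htrace, ofReal_re, hE, trace_conjTranspose_mul_diagonal_indicator_mul S hU, natCast_re]

theorem projection_trace_bound
    (a : ℝ → ℝ) (ha_meas : Measurable a) (ha01 : ∀ x, a x ∈ Set.Icc (0:ℝ) 1)
    (α ω : ℝ) (hα : 0 ≤ α) (hω : ω < 2 * Real.pi)
    (hzero : ∀ x ∈ Set.Icc α ω, a x = 0)
    (δ : ℝ) (hδ0 : 0 < δ) (hδ : δ < (ω - α) / 2)
    (F : lp (fun _ : ℤ => ℂ) 2 ≃ₗᵢ[ℂ] Lp ℂ 2 μ2π)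
    (hF : ∀ k : ℤ, (F (lp.single 2 k (1 : ℂ)) : ℝ → ℂ)
      =ᵐ[μ2π] fun x => Complex.exp (Complex.I * k * x) / Real.sqrt (2 * Real.pi))
    (A : lp (fun _ : ℤ => ℂ) 2 →L[ℂ] lp (fun _ : ℤ => ℂ) 2)
    (hA : ∀ ψ, (F (A ψ) : ℝ → ℂ) =ᵐ[μ2π] fun x => (a x : ℂ) * (F ψ : ℝ → ℂ) x)
    (n : ℕ) (hn : 1 ≤ n) :
    (Eproj n α ω δ).IsHermitian ∧
    Eproj n α ω δ * Eproj n α ω δ = Eproj n α ω δ ∧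
    ((Eproj n α ω δ * compressMat A n).trace).im = 0 ∧
    ((Eproj n α ω δ * compressMat A n).trace).re
      ≤ ((Eproj n α ω δ).trace).re * (1 / (n * Real.sin (δ / 2) ^ 2)) :=
  projection_trace_bound_general a ha01 α ω hα hω hzero δ hδ0 F hF A hA n
end
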